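/- Let ν ≥ 0, α > -1, and let p_{n,m}^α denote the monic polynomial of degree n+m satisfying ∫₀^∞ p_{n,m}^α(x) x^(k+α) ρ_ν(x) dx = 0 for k < n and ∫₀^∞ p_{n,m}^α(x) x^(k+α) ρ_(ν+1)(x) dx = 0 for k < m (assumed to exist uniquely for the index pairs involved). Then (p_{n,n}^α)'(x) = 2n · p_{n,n-1}^(α+1)(x) for all n ≥ 1. -/

import Mathlib

open MeasureTheory Real Set

noncomputable def rho (ν x : ℝ) : ℝ :=
  ∫ t in Set.Ioi (0:ℝ), t ^ (ν - 1) * Real.exp (-t - x / t)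

noncomputable def K (ν z : ℝ) : ℝ :=
  (1/2) * (z/2) ^ ν * ∫ t in Set.Ioi (0:ℝ), Real.exp (-t - z^2 / (4*t)) * t ^ (-ν - 1)

/-- `p` is the monic type-2 multiple orthogonal polynomial of multi-index `(n,m)`
for the weights `x^α ρ_ν` and `x^α ρ_{ν+1}` on `(0,∞)`. -/
def IsType2MOP (ν α : ℝ) (n m : ℕ) (p : Polynomial ℝ) : Prop :=
  p.Monic ∧ p.natDegree = n + m ∧
  (∀ k : ℕ, k < n → ∫ x in Set.Ioi (0:ℝ), p.eval x * x ^ ((k : ℝ) + α) * rho ν x = 0) ∧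
  (∀ k : ℕ, k < m → ∫ x in Set.Ioi (0:ℝ), p.eval x * x ^ ((k : ℝ) + α) * rho (ν + 1) x = 0)

/-! Integrate `P'` by parts against `x ^ (k + α + 1) ρ_ν` and `x ^ (k + α + 1) ρ_{ν+1}`.
Using `ρ_{ν+1}' = -ρ_ν` and the recurrence `x ρ_{ν-1} = ρ_{ν+1} - ν ρ_ν` (itself an integration
by parts in `t`), both integrals become combinations of moments of `P` that vanish by its
orthogonality. Hence `P' / (2n)` satisfies the defining conditions of the multi-index `(n, n - 1)`
with parameter `α + 1`, and uniqueness identifies it with `Q`. The boundary terms vanish because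
`e^{-u} ≤ s^s u^{-s}` gives `ρ_μ(x) ≤ C x^{-s}` for every `s > 0` with `μ + s > 0`. -/

open Filter Topology Polynomial

lemma exp_neg_le_rpow_mul_rpow_neg {s u : ℝ} (hs : 0 < s) (hu : 0 < u) :
    exp (-u) ≤ s ^ s * u ^ (-s) := by
  have hlin : u ≤ s * exp (u / s) := by
    have := mul_le_mul_of_nonneg_left (add_one_le_exp (u / s)) hs.le
    rw [mul_add, mul_div_cancel₀ u hs.ne'] at this
    linarith
  have hpow : u ^ s ≤ s ^ s * exp u := by
    calc u ^ s ≤ (s * exp (u / s)) ^ s := rpow_le_rpow hu.le hlin hs.le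
      _ = s ^ s * exp u := by
        rw [mul_rpow hs.le (exp_pos _).le, ← exp_mul, div_mul_cancel₀ u hs.ne']
  rw [exp_neg, rpow_neg hu.le, ← div_eq_mul_inv, le_div_iff₀ (rpow_pos_of_pos hu s),
    inv_mul_le_iff₀ (exp_pos u)]
  linarith

lemma rpow_mul_exp_neg_sub_div_le (a : ℝ) {s x t : ℝ} (hs : 0 < s) (hx : 0 < x) (ht : 0 < t) :
    t ^ a * exp (-t - x / t) ≤ s ^ s * x ^ (-s) * (exp (-t) * t ^ (a + s)) := by
  have hexp : exp (-(x / t)) ≤ s ^ s * (x ^ (-s) * t ^ s) := by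
    have := exp_neg_le_rpow_mul_rpow_neg hs (div_pos hx ht)
    rw [rpow_neg (div_pos hx ht).le, div_rpow hx.le ht.le, inv_div] at this
    exact this.trans_eq (by rw [rpow_neg hx.le]; ring)
  calc t ^ a * exp (-t - x / t) = t ^ a * exp (-t) * exp (-(x / t)) := by
        rw [sub_eq_add_neg, exp_add, mul_assoc]
    _ ≤ t ^ a * exp (-t) * (s ^ s * (x ^ (-s) * t ^ s)) := by gcongr
    _ = s ^ s * x ^ (-s) * (exp (-t) * t ^ (a + s)) := by rw [rpow_add ht]; ring

lemma continuousOn_rpow_mul_exp_neg_sub_div (a x : ℝ) :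
    ContinuousOn (fun t : ℝ => t ^ a * exp (-t - x / t)) (Ioi 0) := by
  intro t (ht : 0 < t)
  exact ContinuousAt.continuousWithinAt
    (by fun_prop (disch := first | exact ht.ne' | exact Or.inl ht.ne'))

lemma integrableOn_rpow_mul_exp_neg_sub_div (a : ℝ) {x : ℝ} (hx : 0 < x) :
    IntegrableOn (fun t : ℝ => t ^ a * exp (-t - x / t)) (Ioi 0) := by
  set s := |a| + 1
  have hs : 0 < s := by positivity
  have hmaj : IntegrableOn (fun t : ℝ => s ^ s * x ^ (-s) * (exp (-t) * t ^ (a + s + 1 - 1)))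
      (Ioi 0) := (GammaIntegral_convergent (by linarith [neg_abs_le a])).const_mul _
  simp only [add_sub_cancel_right] at hmaj
  refine Integrable.mono' hmaj
    ((continuousOn_rpow_mul_exp_neg_sub_div a x).aestronglyMeasurable measurableSet_Ioi) ?_
  filter_upwards [ae_restrict_mem measurableSet_Ioi] with t (ht : 0 < t)
  rw [norm_of_nonneg (by positivity)]
  exact rpow_mul_exp_neg_sub_div_le a hs hx ht

lemma rho_nonneg (ν x : ℝ) : 0 ≤ rho ν x :=
  setIntegral_nonneg measurableSet_Ioi fun t (ht : 0 < t) => by positivity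

lemma exists_rho_le_mul_rpow_neg {μ s : ℝ} (hs : 0 < s) (hμs : 0 < μ + s) :
    ∃ C, ∀ x > 0, rho μ x ≤ C * x ^ (-s) := by
  refine ⟨s ^ s * Gamma (μ + s), fun x hx => ?_⟩
  calc rho μ x ≤ ∫ t in Ioi 0, s ^ s * x ^ (-s) * (exp (-t) * t ^ (μ + s - 1)) := by
        refine setIntegral_mono_on (integrableOn_rpow_mul_exp_neg_sub_div _ hx)
          ((GammaIntegral_convergent hμs).const_mul _) measurableSet_Ioi fun t ht => ?_
        rw [add_sub_right_comm]
        exact rpow_mul_exp_neg_sub_div_le (μ - 1) hs hx ht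
    _ = s ^ s * Gamma (μ + s) * x ^ (-s) := by
        rw [integral_const_mul, Gamma_eq_integral hμs]; ring

lemma hasDerivAt_rho (μ : ℝ) {x : ℝ} (hx : 0 < x) :
    HasDerivAt (rho μ) (-rho (μ - 1) x) x := by
  have key := hasDerivAt_integral_of_dominated_loc_of_deriv_le
    (F := fun y t => t ^ (μ - 1) * exp (-t - y / t))
    (F' := fun y t => -(t ^ (μ - 1 - 1) * exp (-t - y / t)))
    (bound := fun t => t ^ (μ - 1 - 1) * exp (-t - (x / 2) / t))
    (μ := volume.restrict (Ioi 0)) (Metric.ball_mem_nhds x (half_pos hx))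
    (Eventually.of_forall fun y =>
      (continuousOn_rpow_mul_exp_neg_sub_div _ y).aestronglyMeasurable measurableSet_Ioi)
    (integrableOn_rpow_mul_exp_neg_sub_div _ hx)
    ((continuousOn_rpow_mul_exp_neg_sub_div _ x).aestronglyMeasurable measurableSet_Ioi).neg
    ?_ (integrableOn_rpow_mul_exp_neg_sub_div _ (half_pos hx)) ?_
  · have h := key.2
    rw [integral_neg] at h
    exact h
  · filter_upwards [ae_restrict_mem measurableSet_Ioi] with t (ht : 0 < t) y hy
    have hy : x / 2 < y := by
      linarith [(abs_lt.mp (mem_ball_iff_norm.mp hy)).1]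
    rw [norm_neg, norm_of_nonneg (by positivity)]
    gcongr
  · filter_upwards [ae_restrict_mem measurableSet_Ioi] with t (ht : 0 < t) y _
    have hE : HasDerivAt (fun y : ℝ => exp (-t - y / t)) (exp (-t - y / t) * -(1 / t)) y := by
      simpa using (((hasDerivAt_id y).div_const t).const_sub (-t)).exp
    refine (hE.const_mul (t ^ (μ - 1))).congr_deriv ?_
    rw [sub_eq_add_neg (μ - 1), rpow_add ht, rpow_neg_one]
    ring

lemma continuousOn_rho (μ : ℝ) : ContinuousOn (rho μ) (Ioi 0) :=
  fun _ hx => (hasDerivAt_rho μ hx).continuousAt.continuousWithinAt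

lemma tendsto_rpow_mul_exp_neg_sub_div_nhdsGT_zero (a : ℝ) {x : ℝ} (hx : 0 < x) :
    Tendsto (fun t : ℝ => t ^ a * exp (-t - x / t)) (𝓝[>] 0) (𝓝 0) := by
  set s := |a| + 1
  have has : 0 < a + s := by linarith [neg_abs_le a]
  have hlim : Tendsto (fun t : ℝ => s ^ s * x ^ (-s) * (exp (-t) * t ^ (a + s))) (𝓝[>] 0)
      (𝓝 0) := by
    have hc : ContinuousAt (fun t : ℝ => s ^ s * x ^ (-s) * (exp (-t) * t ^ (a + s))) 0 := by
      fun_prop (disch := exact Or.inr has.le)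
    simpa [zero_rpow has.ne'] using hc.tendsto.mono_left nhdsWithin_le_nhds
  refine squeeze_zero' ?_ ?_ hlim
  · filter_upwards [self_mem_nhdsWithin] with t (ht : 0 < t)
    positivity
  · filter_upwards [self_mem_nhdsWithin] with t (ht : 0 < t)
    exact rpow_mul_exp_neg_sub_div_le a (by positivity) hx ht

lemma tendsto_rpow_mul_exp_neg_sub_div_atTop (a : ℝ) {x : ℝ} (hx : 0 ≤ x) :
    Tendsto (fun t : ℝ => t ^ a * exp (-t - x / t)) atTop (𝓝 0) := by
  refine squeeze_zero' ?_ ?_ (tendsto_rpow_mul_exp_neg_mul_atTop_nhds_zero a 1 one_pos)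
  · filter_upwards [eventually_gt_atTop 0] with t ht
    positivity
  · filter_upwards [eventually_gt_atTop 0] with t ht
    gcongr
    linarith [div_nonneg hx ht.le]

lemma mul_rho_sub_one (ν : ℝ) {x : ℝ} (hx : 0 < x) :
    x * rho (ν - 1) x = rho (ν + 1) x - ν * rho ν x := by
  set E : ℝ → ℝ := fun t => exp (-t - x / t)
  have hint : ∀ a : ℝ, IntegrableOn (fun t => t ^ a * E t) (Ioi 0) :=
    fun a => integrableOn_rpow_mul_exp_neg_sub_div a hx
  have hE : ∀ t ∈ Ioi (0 : ℝ), HasDerivAt E (E t * (-1 + x / t ^ 2)) t := by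
    intro t (ht : 0 < t)
    have h : HasDerivAt (fun t : ℝ => -t - x * t⁻¹) (-1 + x / t ^ 2) t :=
      ((hasDerivAt_neg' (x := t)).fun_sub ((hasDerivAt_inv ht.ne').const_mul x)).congr_deriv
        (by ring)
    exact h.exp
  have hderiv : ∀ t ∈ Ioi (0 : ℝ),
      ν * t ^ (ν - 1) * E t + t ^ ν * (E t * (-1 + x / t ^ 2)) =
        ν * (t ^ (ν - 1) * E t) - t ^ (ν + 1 - 1) * E t + x * (t ^ (ν - 1 - 1) * E t) := by
    intro t (ht : 0 < t)
    rw [add_sub_cancel_right, sub_sub, one_add_one_eq_two, rpow_sub ht ν 2, rpow_two]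
    field_simp
    ring
  have hA : IntegrableOn (fun t => ν * (t ^ (ν - 1) * E t)) (Ioi 0) := (hint _).const_mul ν
  have hB : IntegrableOn (fun t => x * (t ^ (ν - 1 - 1) * E t)) (Ioi 0) := (hint _).const_mul x
  have hAB : IntegrableOn (fun t => ν * (t ^ (ν - 1) * E t) - t ^ (ν + 1 - 1) * E t) (Ioi 0) :=
    hA.sub (hint _)
  have hibp := integral_Ioi_deriv_mul_eq_sub (a' := 0) (b' := 0)
    (fun t (ht : 0 < t) => hasDerivAt_rpow_const (p := ν) (Or.inl ht.ne')) hE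
    ((hAB.add hB).congr_fun (fun t ht => (hderiv t ht).symm) measurableSet_Ioi) ?_ ?_
  · rw [setIntegral_congr_fun measurableSet_Ioi hderiv, integral_add hAB hB,
      integral_sub hA (hint _), integral_const_mul, integral_const_mul, sub_zero] at hibp
    change ν * rho ν x - rho (ν + 1) x + x * rho (ν - 1) x = 0 at hibp
    linarith
  · exact tendsto_rpow_mul_exp_neg_sub_div_nhdsGT_zero ν hx
  · exact tendsto_rpow_mul_exp_neg_sub_div_atTop ν hx.le

lemma exists_rpow_mul_rho_le {μ s : ℝ} (b : ℝ) (hs : 0 < s) (hμs : 0 < μ + s) :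
    ∃ C, ∀ x > 0, x ^ b * rho μ x ≤ C * x ^ (b - s) := by
  obtain ⟨C, hC⟩ := exists_rho_le_mul_rpow_neg hs hμs
  refine ⟨C, fun x hx => ?_⟩
  calc x ^ b * rho μ x ≤ x ^ b * (C * x ^ (-s)) := by gcongr; exact hC x hx
    _ = C * x ^ (b - s) := by rw [sub_eq_add_neg, rpow_add hx]; ring

lemma integrableOn_rpow_mul_rho_of_integrableOn {μ s b : ℝ} {S : Set ℝ} (hS : MeasurableSet S)
    (hS0 : S ⊆ Ioi 0) (hs : 0 < s) (hμs : 0 < μ + s)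
    (h : IntegrableOn (fun x : ℝ => x ^ (b - s)) S) :
    IntegrableOn (fun x : ℝ => x ^ b * rho μ x) S := by
  obtain ⟨C, hC⟩ := exists_rpow_mul_rho_le b hs hμs
  have hcont : ContinuousOn (fun x : ℝ => x ^ b * rho μ x) (Ioi 0) :=
    (continuousOn_id.rpow_const fun x hx => Or.inl (ne_of_gt hx)).mul (continuousOn_rho μ)
  refine Integrable.mono' (h.const_mul C) ((hcont.mono hS0).aestronglyMeasurable hS) ?_
  filter_upwards [ae_restrict_mem hS] with x hx
  have hx : 0 < x := hS0 hx
  rw [norm_of_nonneg (mul_nonneg (rpow_nonneg hx.le b) (rho_nonneg μ x))]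
  exact hC x hx

lemma integrableOn_rpow_mul_rho {μ b : ℝ} (hμ : 0 ≤ μ) (hb : -1 < b) :
    IntegrableOn (fun x : ℝ => x ^ b * rho μ x) (Ioi 0) := by
  rw [← Ioc_union_Ioi_eq_Ioi zero_le_one]
  refine IntegrableOn.union ?_ ?_
  · refine integrableOn_rpow_mul_rho_of_integrableOn (s := (b + 1) / 2) measurableSet_Ioc
      Ioc_subset_Ioi_self (by linarith) (by linarith) ?_
    exact (intervalIntegrable_iff_integrableOn_Ioc_of_le zero_le_one).mp
      (intervalIntegral.intervalIntegrable_rpow' (by linarith))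
  · refine integrableOn_rpow_mul_rho_of_integrableOn (s := b + 2) measurableSet_Ioi
      (Ioi_subset_Ioi zero_le_one) (by linarith) (by linarith) ?_
    exact integrableOn_Ioi_rpow_of_lt (by linarith) one_pos

lemma tendsto_rpow_mul_rho_of_tendsto {μ s c : ℝ} {l : Filter ℝ} (hs : 0 < s) (hμs : 0 < μ + s)
    (hl : ∀ᶠ x in l, 0 < x) (h : Tendsto (fun x : ℝ => x ^ (c - s)) l (𝓝 0)) :
    Tendsto (fun x : ℝ => x ^ c * rho μ x) l (𝓝 0) := by
  obtain ⟨C, hC⟩ := exists_rpow_mul_rho_le c hs hμs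
  refine squeeze_zero' ?_ ?_ (by simpa using h.const_mul C)
  · filter_upwards [hl] with x hx
    exact mul_nonneg (rpow_nonneg hx.le c) (rho_nonneg μ x)
  · filter_upwards [hl] with x hx
    exact hC x hx

lemma tendsto_rpow_mul_rho_nhdsGT_zero {μ c : ℝ} (hμ : 0 ≤ μ) (hc : 0 < c) :
    Tendsto (fun x : ℝ => x ^ c * rho μ x) (𝓝[>] 0) (𝓝 0) := by
  refine tendsto_rpow_mul_rho_of_tendsto (s := c / 2) (by positivity) (by positivity)
    self_mem_nhdsWithin ?_
  have h := (continuousAt_rpow_const 0 (c - c / 2) (Or.inr (by linarith))).tendsto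
  simpa [zero_rpow (by linarith : c - c / 2 ≠ 0)] using h.mono_left nhdsWithin_le_nhds

lemma tendsto_rpow_mul_rho_atTop {μ : ℝ} (c : ℝ) (hμ : 0 ≤ μ) :
    Tendsto (fun x : ℝ => x ^ c * rho μ x) atTop (𝓝 0) := by
  refine tendsto_rpow_mul_rho_of_tendsto (s := |c| + 1) (by positivity) (by positivity)
    (eventually_gt_atTop 0) ?_
  simpa using tendsto_rpow_neg_atTop (by linarith [le_abs_self c] : 0 < |c| + 1 - c)

lemma eval_mul_rpow_eq_sum (p : ℝ[X]) {x : ℝ} (hx : 0 < x) (b : ℝ) :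
    p.eval x * x ^ b = ∑ i ∈ Finset.range (p.natDegree + 1), p.coeff i * x ^ ((i : ℝ) + b) := by
  rw [eval_eq_sum_range, Finset.sum_mul]
  refine Finset.sum_congr rfl fun i _ => ?_
  rw [rpow_add hx, rpow_natCast]
  ring

lemma integrableOn_eval_mul_rpow_mul_rho (p : ℝ[X]) {μ b : ℝ} (hμ : 0 ≤ μ) (hb : -1 < b) :
    IntegrableOn (fun x : ℝ => p.eval x * x ^ b * rho μ x) (Ioi 0) := by
  have hterm : ∀ i : ℕ, IntegrableOn (fun x : ℝ => p.coeff i * (x ^ ((i : ℝ) + b) * rho μ x))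
      (Ioi 0) := fun i =>
    (integrableOn_rpow_mul_rho hμ (by linarith [i.cast_nonneg (α := ℝ)])).const_mul _
  refine (integrable_finsetSum (Finset.range (p.natDegree + 1)) fun i _ => hterm i).congr ?_
  filter_upwards [ae_restrict_mem measurableSet_Ioi] with x (hx : 0 < x)
  simp only [eval_mul_rpow_eq_sum p hx, Finset.sum_mul, mul_assoc]

lemma tendsto_eval_mul_rpow_mul_rho_nhdsGT_zero (p : ℝ[X]) {μ c : ℝ} (hμ : 0 ≤ μ) (hc : 0 < c) :
    Tendsto (fun x : ℝ => p.eval x * (x ^ c * rho μ x)) (𝓝[>] 0) (𝓝 0) := by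
  simpa using (p.continuousAt.tendsto.mono_left nhdsWithin_le_nhds).mul
    (tendsto_rpow_mul_rho_nhdsGT_zero hμ hc)

lemma tendsto_eval_mul_rpow_mul_rho_atTop (p : ℝ[X]) {μ : ℝ} (c : ℝ) (hμ : 0 ≤ μ) :
    Tendsto (fun x : ℝ => p.eval x * (x ^ c * rho μ x)) atTop (𝓝 0) := by
  have h := tendsto_finsetSum (Finset.range (p.natDegree + 1)) fun i _ =>
    (tendsto_rpow_mul_rho_atTop ((i : ℝ) + c) hμ).const_mul (p.coeff i)
  simp only [mul_zero, Finset.sum_const_zero] at h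
  refine h.congr' ?_
  filter_upwards [eventually_gt_atTop 0] with x hx
  simp only [← mul_assoc, eval_mul_rpow_eq_sum p hx, Finset.sum_mul]

lemma hasDerivAt_rpow_mul_rho_add_one (c ν : ℝ) {x : ℝ} (hx : 0 < x) :
    HasDerivAt (fun x : ℝ => x ^ c * rho (ν + 1) x)
      (c * x ^ (c - 1) * rho (ν + 1) x - x ^ c * rho ν x) x := by
  have h := (hasDerivAt_rpow_const (p := c) (Or.inl hx.ne')).mul (hasDerivAt_rho (ν + 1) hx)
  rw [add_sub_cancel_right] at h
  exact h.congr_deriv (by ring)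

lemma hasDerivAt_rpow_mul_rho (c ν : ℝ) {x : ℝ} (hx : 0 < x) :
    HasDerivAt (fun x : ℝ => x ^ c * rho ν x)
      (x ^ (c - 1) * ((c + ν) * rho ν x - rho (ν + 1) x)) x := by
  have h := (hasDerivAt_rpow_const (p := c) (Or.inl hx.ne')).mul (hasDerivAt_rho ν hx)
  refine h.congr_deriv ?_
  have hxc : x ^ c = x ^ (c - 1) * x := by rw [← rpow_add_one hx.ne', sub_add_cancel]
  rw [hxc]
  linear_combination (-x ^ (c - 1)) * mul_rho_sub_one ν hx

lemma integral_derivative_mul_rpow_mul_rho_eq {p : ℝ[X]} {μ c : ℝ} {w' : ℝ → ℝ}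
    (hμ : 0 ≤ μ) (hc : 0 < c)
    (hw : ∀ x ∈ Ioi (0 : ℝ), HasDerivAt (fun x : ℝ => x ^ c * rho μ x) (w' x) x)
    (hpw' : IntegrableOn (fun x => p.eval x * w' x) (Ioi 0)) :
    ∫ x in Ioi 0, p.derivative.eval x * x ^ c * rho μ x = -∫ x in Ioi 0, p.eval x * w' x := by
  have h := integral_Ioi_mul_deriv_eq_deriv_mul (fun x _ => p.hasDerivAt x) hw hpw'
    (by simpa only [Pi.mul_def, mul_assoc] using
      integrableOn_eval_mul_rpow_mul_rho p.derivative hμ (by linarith : -1 < c))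
    (tendsto_eval_mul_rpow_mul_rho_nhdsGT_zero p hμ hc)
    (tendsto_eval_mul_rpow_mul_rho_atTop p c hμ)
  simp only [mul_assoc] at h ⊢
  linarith

lemma integral_derivative_mul_rpow_mul_rho {p : ℝ[X]} {ν c : ℝ} (hν : 0 ≤ ν) (hc : 0 < c) :
    ∫ x in Ioi 0, p.derivative.eval x * x ^ c * rho ν x =
      (∫ x in Ioi 0, p.eval x * x ^ (c - 1) * rho (ν + 1) x)
        - (c + ν) * ∫ x in Ioi 0, p.eval x * x ^ (c - 1) * rho ν x := by
  have hν' : IntegrableOn (fun x => p.eval x * x ^ (c - 1) * rho ν x) (Ioi 0) :=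
    integrableOn_eval_mul_rpow_mul_rho p hν (by linarith)
  have hν1 : IntegrableOn (fun x => p.eval x * x ^ (c - 1) * rho (ν + 1) x) (Ioi 0) :=
    integrableOn_eval_mul_rpow_mul_rho p (by linarith) (by linarith)
  rw [integral_derivative_mul_rpow_mul_rho_eq hν hc (fun x hx => hasDerivAt_rpow_mul_rho c ν hx)
    (IntegrableOn.congr_fun ((hν'.const_mul (c + ν)).sub hν1)
      (fun x _ => by simp only [Pi.sub_apply]; ring) measurableSet_Ioi),
    ← integral_const_mul, ← integral_sub hν1 (hν'.const_mul _),
    ← integral_neg]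
  congr 1
  ext x
  ring

lemma integral_derivative_mul_rpow_mul_rho_add_one {p : ℝ[X]} {ν c : ℝ} (hν : 0 ≤ ν)
    (hc : 0 < c) :
    ∫ x in Ioi 0, p.derivative.eval x * x ^ c * rho (ν + 1) x =
      (∫ x in Ioi 0, p.eval x * x ^ c * rho ν x)
        - c * ∫ x in Ioi 0, p.eval x * x ^ (c - 1) * rho (ν + 1) x := by
  have hν' : IntegrableOn (fun x => p.eval x * x ^ c * rho ν x) (Ioi 0) :=
    integrableOn_eval_mul_rpow_mul_rho p hν (by linarith)
  have hν1 : IntegrableOn (fun x => p.eval x * x ^ (c - 1) * rho (ν + 1) x) (Ioi 0) :=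
    integrableOn_eval_mul_rpow_mul_rho p (by linarith) (by linarith)
  rw [integral_derivative_mul_rpow_mul_rho_eq (by linarith) hc
    (fun x hx => hasDerivAt_rpow_mul_rho_add_one c ν hx)
    (IntegrableOn.congr_fun ((hν1.const_mul c).sub hν')
      (fun x _ => by simp only [Pi.sub_apply]; ring) measurableSet_Ioi),
    ← integral_const_mul, ← integral_sub hν' (hν1.const_mul _),
    ← integral_neg]
  congr 1
  ext x
  ring

lemma IsType2MOP.C_inv_mul_derivative {ν α : ℝ} {n : ℕ} {P : ℝ[X]} (hν : 0 ≤ ν) (hα : -1 < α)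
    (hn : 1 ≤ n) (hP : IsType2MOP ν α n n P) :
    IsType2MOP ν (α + 1) n (n - 1) (C ((2 * n : ℕ) : ℝ)⁻¹ * derivative P) := by
  obtain ⟨hmonic, hdeg, horth, horth_succ⟩ := hP
  have h2n : ((2 * n : ℕ) : ℝ) ≠ 0 := by positivity
  have hscale : ∀ (μ : ℝ) (k : ℕ),
      ∫ x in Ioi 0, (C ((2 * n : ℕ) : ℝ)⁻¹ * derivative P).eval x *
        x ^ ((k : ℝ) + (α + 1)) * rho μ x =
      ((2 * n : ℕ) : ℝ)⁻¹ *
        ∫ x in Ioi 0, (derivative P).eval x * x ^ ((k : ℝ) + α + 1) * rho μ x := by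
    intro μ k
    simp only [eval_mul, eval_C, ← add_assoc, mul_assoc, integral_const_mul]
  refine ⟨?_, ?_, fun k hk => ?_, fun k hk => ?_⟩
  · refine monic_C_mul_of_mul_leadingCoeff_eq_one ?_
    rw [leadingCoeff_derivative, hmonic.leadingCoeff, hdeg, one_mul, ← two_mul]
    exact inv_mul_cancel₀ h2n
  · rw [natDegree_C_mul (inv_ne_zero h2n), natDegree_derivative, hdeg]
    omega
  · have hc : 0 < (k : ℝ) + α + 1 := by linarith [k.cast_nonneg (α := ℝ)]
    rw [hscale, integral_derivative_mul_rpow_mul_rho hν hc, add_sub_cancel_right, horth_succ k hk,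
      horth k hk, mul_zero, sub_zero, mul_zero]
  · have hc : 0 < (k : ℝ) + α + 1 := by linarith [k.cast_nonneg (α := ℝ)]
    have hk1 := horth (k + 1) (by omega)
    rw [Nat.cast_succ, add_right_comm] at hk1
    rw [hscale, integral_derivative_mul_rpow_mul_rho_add_one hν hc, add_sub_cancel_right, hk1,
      horth_succ k (by omega), mul_zero, sub_zero, mul_zero]

theorem type2_deriv_nn_general (ν α : ℝ) (hν : 0 ≤ ν) (hα : -1 < α) (n : ℕ) (hn : 1 ≤ n)
    (P Q : Polynomial ℝ)
    (hP : IsType2MOP ν α n n P)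
    (hQuniq : ∀ R : Polynomial ℝ, IsType2MOP ν (α + 1) n (n - 1) R → R = Q) :
    Polynomial.derivative P = Polynomial.C ((2 * n : ℕ) : ℝ) * Q := by
  rw [← hQuniq _ (hP.C_inv_mul_derivative hν hα hn), ← mul_assoc, ← C_mul,
    mul_inv_cancel₀ (by positivity), C_1, one_mul]

theorem type2_deriv_nn (ν α : ℝ) (hν : 0 ≤ ν) (hα : -1 < α) (n : ℕ) (hn : 1 ≤ n)
    (P Q : Polynomial ℝ)
    (hP : IsType2MOP ν α n n P) (hQ : IsType2MOP ν (α + 1) n (n - 1) Q)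
    (hQuniq : ∀ R : Polynomial ℝ, IsType2MOP ν (α + 1) n (n - 1) R → R = Q) :
    Polynomial.derivative P = Polynomial.C ((2 * n : ℕ) : ℝ) * Q :=
  type2_deriv_nn_general ν α hν hα n hn P Q hP hQuniq
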